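/- For n ≥ 3 odd, the Laplacian simplex T_{C_n} of the n-cycle is reflexive: for each i ∈ [n], the unique solution v_i ∈ R^{n-1} of L_B(i | ∅)·v_i = 1 is an integer vector. Explicitly, v_n = ((2j+1-n)/2)_{j=1}^{n-1} and these are integral exactly when n is odd. -/
import Mathlib


lemma card_compl_single {n : ℕ} (a : Fin n) :
    ({a}ᶜ : Finset (Fin n)).card = n - 1 := by
  simp [Finset.card_compl]

/-- `delR M i` is `M` with row `i` deleted (rows kept in increasing order). -/
def delR {m l : ℕ} (M : Matrix (Fin m) (Fin l) ℤ) (i : Fin m) :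
    Matrix (Fin (m - 1)) (Fin l) ℤ :=
  fun a b => M (({i}ᶜ : Finset (Fin m)).orderIsoOfFin (card_compl_single i) a) b

/-- auxiliary solution vector -/
def vvOCR (m i j : ℕ) : ℤ := if j < i then (j:ℤ) + m + 1 - i else (j:ℤ) - m - i

/-- partial tail sums -/
def WWOCR (m i t : ℕ) : ℤ := ∑ j ∈ Finset.Ico t (2*m), vvOCR m i j

lemma WWOCR_last (m i : ℕ) : WWOCR m i (2*m) = 0 := by simp [WWOCR]

lemma WWOCR_step (m i t : ℕ) (ht : t < 2*m) :
    WWOCR m i t = vvOCR m i t + WWOCR m i (t+1) := by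
  unfold WWOCR
  rw [Finset.sum_eq_sum_Ico_succ_bot ht]

lemma gaussOCR (t : ℕ) : (∑ j ∈ Finset.range t, (j:ℤ)) * 2 = t * t - t := by
  induction t with
  | zero => simp
  | succ k ih => rw [Finset.sum_range_succ]; push_cast; push_cast at ih; linarith


lemma WWOCR_zero (m i : ℕ) (hi : i ≤ 2*m) : WWOCR m i 0 = (i:ℤ) - m := by
  have hsplit : WWOCR m i 0 =
      (∑ j ∈ Finset.range i, vvOCR m i j) + ∑ j ∈ Finset.Ico i (2*m), vvOCR m i j := by
    unfold WWOCR
    rw [Finset.range_eq_Ico, Finset.sum_Ico_consecutive _ (Nat.zero_le i) hi]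
  have h1 : ∑ j ∈ Finset.range i, vvOCR m i j
      = ∑ j ∈ Finset.range i, ((j:ℤ) + ((m:ℤ) + 1 - i)) := by
    apply Finset.sum_congr rfl
    intro j hj
    rw [Finset.mem_range] at hj
    simp [vvOCR, hj]
    ring
  have h2 : ∑ j ∈ Finset.Ico i (2*m), vvOCR m i j
      = ∑ j ∈ Finset.Ico i (2*m), ((j:ℤ) + (-(m:ℤ) - i)) := by
    apply Finset.sum_congr rfl
    intro j hj
    rw [Finset.mem_Ico] at hj
    simp [vvOCR, Nat.not_lt.mpr hj.1]
    ring
  rw [hsplit, h1, h2, Finset.sum_add_distrib, Finset.sum_add_distrib,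
    Finset.sum_const, Finset.sum_const, Finset.card_range, Nat.card_Ico,
    nsmul_eq_mul, nsmul_eq_mul, Finset.sum_Ico_eq_sub _ hi]
  have g1 := gaussOCR i
  have g2 := gaussOCR (2*m)
  have hcast : ((2*m - i : ℕ) : ℤ) = 2*(m:ℤ) - i := by push_cast [hi]; ring
  rw [hcast]
  push_cast at g2 ⊢
  nlinarith [g1, g2]

lemma sumIteIcoOCR (t N : ℕ) (f : ℕ → ℤ) :
    ∑ j ∈ Finset.range N, (if t ≤ j then f j else 0) = ∑ j ∈ Finset.Ico t N, f j := by
  rw [← Finset.sum_filter]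
  congr 1
  ext j
  simp only [Finset.mem_filter, Finset.mem_Ico, Finset.mem_range]
  omega

lemma keyOCR {n : ℕ} (m : ℕ) (hnm : n = 2*m+1) (hm : 1 ≤ m)
    (L : Matrix (Fin n) (Fin n) ℤ)
    (hL : ∀ a b : Fin n, L a b =
      if a = b then 2 else if b = a + ⟨1, by omega⟩ ∨ a = b + ⟨1, by omega⟩ then -1 else 0)
    (A : Matrix (Fin n) (Fin (n - 1)) ℤ)
    (hA : ∀ i j, A i j = if (i : ℕ) ≤ (j : ℕ) then 1 else 0)
    (i r : Fin n) (hri : r ≠ i) :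
    (L * A).mulVec (fun j : Fin (n-1) => vvOCR m i j) r = 1 := by
  have hn3 : 3 ≤ n := by omega
  have hrlt := r.isLt
  have hilt := i.isLt
  have hri' : (r : ℕ) ≠ (i : ℕ) := fun h => hri (Fin.ext h)
  have hi2m : (i : ℕ) ≤ 2*m := by omega
  set o : Fin n := ⟨1, by omega⟩ with hodef
  rw [← Matrix.mulVec_mulVec]
  have hw : A.mulVec (fun j : Fin (n-1) => vvOCR m i j) = fun k : Fin n => WWOCR m i (k:ℕ) := by
    funext k
    unfold Matrix.mulVec dotProduct
    simp only [hA, ite_mul, one_mul, zero_mul]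
    rw [Fin.sum_univ_eq_sum_range (fun j => if (k:ℕ) ≤ j then vvOCR m i j else 0) (n-1)]
    rw [sumIteIcoOCR]
    show ∑ j ∈ Finset.Ico (k:ℕ) (n-1), vvOCR m i j = ∑ j ∈ Finset.Ico (k:ℕ) (2*m), vvOCR m i j
    rw [show n - 1 = 2*m from by omega]
  rw [hw]
  -- val computations
  have hadd : ∀ x : Fin n, ((x + o : Fin n) : ℕ) = if (x : ℕ) + 1 = n then 0 else (x : ℕ) + 1 := by
    intro x
    have hx := x.isLt
    have h1 : ((x + o : Fin n) : ℕ) = ((x : ℕ) + 1) % n := by simp [Fin.add_def, hodef]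
    rw [h1]
    by_cases h : (x:ℕ) + 1 = n
    · simp [h]
    · rw [if_neg h, Nat.mod_eq_of_lt (by omega)]
  have hro := hadd r
  have hrm : ((r - o : Fin n) : ℕ) = if (r : ℕ) = 0 then n - 1 else (r : ℕ) - 1 := by
    have h1 : ((r - o : Fin n) : ℕ) = ((r : ℕ) + (n - 1)) % n := by
      simp only [Fin.sub_def, hodef]
      rw [Nat.add_comm]
    rw [h1]
    by_cases h : (r:ℕ) = 0
    · rw [if_pos h, h]
      simpa using Nat.mod_eq_of_lt (show n - 1 < n by omega)
    · rw [if_neg h]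
      have h2 : (r:ℕ) + (n-1) = n + ((r:ℕ) - 1) := by omega
      rw [h2, Nat.add_mod_left, Nat.mod_eq_of_lt (by omega)]
  have d1 : ¬ (r = r + o) := by
    intro h
    have hv := congrArg Fin.val h
    rw [hro] at hv
    split_ifs at hv <;> omega
  have d2 : ¬ (r = r - o) := by
    intro h
    have hv := congrArg Fin.val h
    rw [hrm] at hv
    split_ifs at hv <;> omega
  have d3 : ¬ (r + o = r - o) := by
    intro h
    have hv := congrArg Fin.val h
    rw [hro, hrm] at hv
    split_ifs at hv <;> omega
  have e1 : ∀ k : Fin n, (r = k + o) ↔ (k = r - o) := by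
    intro k
    have hk := k.isLt
    constructor
    · intro h
      have hv := congrArg Fin.val h
      rw [hadd k] at hv
      apply Fin.ext
      rw [hrm]
      split_ifs at hv ⊢ <;> omega
    · intro h
      have hv := congrArg Fin.val h
      rw [hrm] at hv
      apply Fin.ext
      rw [hadd k]
      split_ifs at hv ⊢ <;> omega
  have hLsplit : ∀ k : Fin n, L r k =
      (if k = r then 2 else 0) + (if k = r + o then -1 else 0) + (if k = r - o then -1 else 0) := by
    intro k
    rw [hL r k]
    by_cases h1 : r = k
    · subst h1
      simp [d1, d2]
    · rw [if_neg h1, if_neg (fun h : k = r => h1 h.symm)]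
      by_cases h2 : k = r + o
      · rw [if_pos h2, if_pos (Or.inl h2), if_neg (show ¬ (k = r - o) from fun h3 => d3 (h2.symm.trans h3))]
        norm_num
      · rw [if_neg h2]
        by_cases h3 : k = r - o
        · rw [if_pos h3, if_pos (Or.inr ((e1 k).mpr h3))]
          norm_num
        · rw [if_neg h3, if_neg]
          · norm_num
          · rintro (h | h)
            · exact h2 h
            · exact h3 ((e1 k).mp h)
  unfold Matrix.mulVec dotProduct
  simp only [hLsplit, add_mul, Finset.sum_add_distrib, ite_mul, zero_mul,
    Finset.sum_ite_eq', Finset.mem_univ, if_true]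
  rw [hro, hrm]
  by_cases h0 : (r : ℕ) = 0
  · rw [if_neg (by omega), if_pos h0, h0]
    have e2 : n - 1 = 2*m := by omega
    rw [e2, WWOCR_last, WWOCR_zero m i hi2m]
    have hst := WWOCR_step m i 0 (by omega)
    rw [WWOCR_zero m i hi2m] at hst
    have hv0 : vvOCR m i 0 = (m:ℤ) + 1 - i := by
      unfold vvOCR
      rw [if_pos (by omega)]
      push_cast
      ring
    rw [hv0] at hst
    linarith
  · by_cases hlast : (r : ℕ) + 1 = n
    · rw [if_pos hlast, if_neg h0]
      have er : (r : ℕ) = 2*m := by omega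
      have er1 : (r : ℕ) - 1 = 2*m - 1 := by omega
      rw [er1, er, WWOCR_last, WWOCR_zero m i hi2m]
      have hst := WWOCR_step m i (2*m - 1) (by omega)
      have e3 : 2*m - 1 + 1 = 2*m := by omega
      rw [e3, WWOCR_last] at hst
      have hvlast : vvOCR m i (2*m - 1) = (m:ℤ) - 1 - i := by
        unfold vvOCR
        rw [if_neg (by omega)]
        push_cast [show 1 ≤ 2*m by omega]
        ring
      rw [hvlast] at hst
      linarith
    · rw [if_neg hlast, if_neg h0]
      have hst1 := WWOCR_step m i (r : ℕ) (by omega)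
      have hst2 := WWOCR_step m i ((r : ℕ) - 1) (by omega)
      have e4 : (r:ℕ) - 1 + 1 = (r:ℕ) := by omega
      rw [e4] at hst2
      have hd : vvOCR m i (r:ℕ) - vvOCR m i ((r:ℕ) - 1) = 1 := by
        unfold vvOCR
        split_ifs <;> push_cast <;> omega
      linarith


/-- For odd `n ≥ 3`, the Laplacian simplex of the `n`-cycle is reflexive:
for each `i` the system `L_B(i | ∅)·v = 𝟙` has an integer solution, and for
`i = n` the solution is explicitly `v_j = j + 1 - (n-1)/2` (0-based), i.e.
`(2j+1-n)/2` in the 1-based indexing of the paper. -/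
theorem odd_cycle_reflexive {n : ℕ} (hn : 3 ≤ n) (hodd : Odd n)
    (L : Matrix (Fin n) (Fin n) ℤ)
    (hL : ∀ a b : Fin n, L a b =
      if a = b then 2 else if b = a + ⟨1, by omega⟩ ∨ a = b + ⟨1, by omega⟩ then -1 else 0)
    (A : Matrix (Fin n) (Fin (n - 1)) ℤ)
    (hA : ∀ i j, A i j = if (i : ℕ) ≤ (j : ℕ) then 1 else 0) :
    (∀ i : Fin n, ∃ v : Fin (n - 1) → ℤ,
      (delR (L * A) i).mulVec v = fun _ => 1) ∧
    (delR (L * A) ⟨n - 1, by omega⟩).mulVec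
        (fun j => (j : ℤ) + 1 - ((n : ℤ) - 1) / 2) = fun _ => 1 := by
  obtain ⟨m, hnm⟩ := hodd
  have hm : 1 ≤ m := by omega
  have main : ∀ i : Fin n,
      (delR (L * A) i).mulVec (fun j : Fin (n-1) => vvOCR m i j) = fun _ => 1 := by
    intro i
    funext a
    set r : Fin n :=
      ((({i}ᶜ : Finset (Fin n)).orderIsoOfFin (card_compl_single i)) a : Fin n) with hr
    have hrne : r ≠ i := by
      have hmem := ((({i}ᶜ : Finset (Fin n)).orderIsoOfFin (card_compl_single i)) a).2
      rw [Finset.mem_compl, Finset.mem_singleton] at hmem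
      exact hmem
    show (L * A).mulVec (fun j : Fin (n-1) => vvOCR m i j) r = 1
    exact keyOCR m hnm hm L hL A hA i r hrne
  constructor
  · intro i
    exact ⟨fun j => vvOCR m i j, main i⟩
  · have hveq : (fun j : Fin (n-1) => (j : ℤ) + 1 - ((n : ℤ) - 1) / 2)
        = fun j : Fin (n-1) => vvOCR m ((⟨n - 1, by omega⟩ : Fin n) : ℕ) j := by
      funext j
      have hj := j.isLt
      show (j : ℤ) + 1 - ((n : ℤ) - 1) / 2 = vvOCR m (n - 1) j
      unfold vvOCR
      rw [if_pos hj]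
      have h1 : ((n : ℤ) - 1) / 2 = m := by
        rw [hnm]; push_cast; omega
      have h2 : ((n - 1 : ℕ) : ℤ) = 2 * m := by
        omega
      rw [h1, h2]
      ring
    rw [hveq]
    exact main ⟨n - 1, by omega⟩
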